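/- For each t ∈ {0,1,…,T−1} and each a ∈ ℤ, the first difference ΔG_t(a,k) = G_t(a+1,k) − G_t(a,k) is non-increasing in k: if k ≤ k' then G_t(a+1,k') − G_t(a,k') ≤ G_t(a+1,k) − G_t(a,k). -/

import Mathlib

open Filter

/-- Negative Binomial pmf with real shape `r` and success probability `p`:
`NB(r,p)(z) = Γ(z+r)/(Γ(r)·z!)·p^r·(1−p)^z` for `r > 0`, and `NB(0,p)` is
the point mass at `0`. -/
noncomputable def NB (r p : ℝ) (z : ℕ) : ℝ :=
  if r = 0 then (if z = 0 then (1 : ℝ) else 0)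
  else Real.Gamma ((z : ℝ) + r) / (Real.Gamma r * (Nat.factorial z : ℝ)) * p ^ r * (1 - p) ^ z

/-- `p_t = (β0 + N·t)/(β0 + N·t + 1)`. -/
noncomputable def pt (β0 : ℝ) (N t : ℕ) : ℝ :=
  (β0 + (N : ℝ) * (t : ℝ)) / (β0 + (N : ℝ) * (t : ℝ) + 1)

/-- Expectation `E_{(Z,K)}[f(Z,K)]` with `Z ~ NB(α0+k, p_t)` and
`K ~ NB((N−1)(α0+k), p_t)` independent. -/
noncomputable def EZK (α0 β0 : ℝ) (N t k : ℕ) (f : ℕ → ℕ → ℝ) : ℝ :=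
  ∑' z : ℕ, ∑' κ : ℕ,
    NB (α0 + (k : ℝ)) (pt β0 N t) z * NB (((N : ℝ) - 1) * (α0 + (k : ℝ))) (pt β0 N t) κ * f z κ

/-- One-period cost plus cost-to-go of ordering up to level `a` at stage `(t,k)`. -/
noncomputable def G (α0 β0 : ℝ) (N : ℕ) (cv ch cb : ℝ) (W : ℕ → ℤ → ℕ → ℝ)
    (t : ℕ) (a : ℤ) (k : ℕ) : ℝ :=
  cv * (a : ℝ)
    + ch * ∑' z : ℕ, NB (α0 + (k : ℝ)) (pt β0 N t) z * max ((a : ℝ) - (z : ℝ)) 0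
    + cb * ∑' z : ℕ, NB (α0 + (k : ℝ)) (pt β0 N t) z * max ((z : ℝ) - (a : ℝ)) 0
    + EZK α0 β0 N t k (fun z κ => W (t + 1) (a - (z : ℤ)) (k + z + κ))

/-!
Write `ΔF(a) = F(a+1) - F(a)`. As `NB(α0+k, p)` has mass one,
`ΔG_t(a,k) = c_v - c_b + (c_h + c_b)·P(Z ≤ a) + E[ΔW_{t+1}(a - Z, k + Z + K)]`.
Negative binomial laws convolve additively in the shape, so passing from `k` to `k + d` replaces
`(Z, K)` by `(Z + D, K + E)` with independent `D ~ NB(d, p)` and `E ~ NB((N-1)d, p)`. Under this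
coupling `P(Z ≤ a)` can only decrease, and so can the last expectation provided `ΔW_{t+1}(x, m)`
is nondecreasing in `x` and nonincreasing in `m`. That property propagates backwards from
`W_T = 0`: since `ΔG_t` is nondecreasing in `a`, minimising over `a ≥ x` gives
`ΔW_t(x, m) = max(ΔG_t(x, m), 0) - c_v`. Nonnegativity and linear growth of `W_t` and
boundedness of `ΔW_t` are carried along; they keep every expectation finite.
-/

open Finset fwdDiff

theorem Real.Gamma_add_nat_div_Gamma {r : ℝ} (hr : 0 < r) (n : ℕ) :
    Real.Gamma (r + n) / Real.Gamma r = (ascPochhammer ℝ n).eval r := by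
  induction n with
  | zero => simp [(Real.Gamma_pos_of_pos hr).ne']
  | succ n ih =>
    rw [ascPochhammer_succ_eval, ← ih, Nat.cast_succ, ← add_assoc,
      Real.Gamma_add_one (by positivity)]
    ring

namespace Ring

theorem multichoose_eq_ascPochhammer_div {K : Type*} [Field K] [CharZero K] (r : K) (n : ℕ) :
    multichoose r n = (ascPochhammer K n).eval r / n.factorial := by
  rw [← Polynomial.ascPochhammer_smeval_eq_eval, ← factorial_nsmul_multichoose_eq_ascPochhammer,
    nsmul_eq_mul, mul_div_cancel_left₀ _ (Nat.cast_ne_zero.mpr n.factorial_ne_zero)]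

theorem multichoose_eq_neg_one_pow_mul_choose_neg {R : Type*} [CommRing R] [BinomialRing R]
    (r : R) (n : ℕ) : multichoose r n = (-1) ^ n * choose (-r) n := by
  rw [choose_neg', Units.smul_def, zsmul_eq_mul, Int.cast_negOnePow_natCast, ← mul_assoc,
    ← mul_pow]
  simp

theorem multichoose_add {R : Type*} [CommRing R] [BinomialRing R] (r s : R) (n : ℕ) :
    multichoose (r + s) n = ∑ ij ∈ antidiagonal n, multichoose r ij.1 * multichoose s ij.2 := by
  rw [multichoose_eq_neg_one_pow_mul_choose_neg, neg_add, add_choose_eq _ (Commute.all _ _),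
    mul_sum]
  refine sum_congr rfl fun ij hij => ?_
  rw [multichoose_eq_neg_one_pow_mul_choose_neg, multichoose_eq_neg_one_pow_mul_choose_neg,
    ← mem_antidiagonal.mp hij, pow_add]
  ring

theorem succ_mul_multichoose_succ {K : Type*} [Field K] [CharZero K] (r : K) (n : ℕ) :
    (n + 1 : K) * multichoose r (n + 1) = r * multichoose (r + 1) n := by
  rw [multichoose_eq_ascPochhammer_div, multichoose_eq_ascPochhammer_div, ascPochhammer_succ_left]
  simp [Polynomial.eval_comp, Nat.factorial_succ]
  field_simp

end Ring

theorem Real.hasSum_multichoose_mul_pow {r x : ℝ} (hx : |x| < 1) :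
    HasSum (fun n => Ring.multichoose r n * x ^ n) (1 / (1 - x) ^ r) := by
  have := (Real.one_div_one_sub_rpow_hasFPowerSeriesOnBall_zero r).hasSum
    (y := x) (by simpa [enorm_eq_nnnorm, ← NNReal.coe_lt_coe] using hx)
  simpa [FormalMultilinearSeries.ofScalars_apply_eq, ← Ring.multichoose_eq, mul_comm] using this

theorem tsum_sum_antidiagonal_mul_le {μ δ : ℕ → ℝ} (hμ0 : ∀ i, 0 ≤ μ i) (hδ0 : ∀ j, 0 ≤ δ j)
    (hμ : Summable μ) (hδ : HasSum δ 1) {φ ψ : ℕ → ℝ} {C : ℝ} (hφ : ∀ n, |φ n| ≤ C)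
    (hψ : ∀ n, |ψ n| ≤ C) (hφψ : ∀ i j, φ (i + j) ≤ ψ i) :
    ∑' n, (∑ ij ∈ antidiagonal n, μ ij.1 * δ ij.2) * φ n ≤ ∑' i, μ i * ψ i := by
  have hμn : Summable fun i => ‖μ i‖ := by simpa [Real.norm_of_nonneg (hμ0 _)] using hμ
  have hδn : Summable fun j => ‖δ j‖ := by simpa [Real.norm_of_nonneg (hδ0 _)] using hδ.summable
  have hμψn : Summable fun i => ‖μ i * ψ i‖ :=
    (hμ.mul_right C).of_nonneg_of_le (fun _ => norm_nonneg _) fun i => by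
      rw [norm_mul, Real.norm_of_nonneg (hμ0 i)]
      exact mul_le_mul_of_nonneg_left (hψ i) (hμ0 i)
  have hconv := (summable_norm_sum_mul_antidiagonal_of_summable_norm hμn hδn).of_norm
  rw [← mul_one (∑' i, μ i * ψ i), ← hδ.tsum_eq,
    tsum_mul_tsum_eq_tsum_sum_antidiagonal_of_summable_norm hμψn hδn]
  refine Summable.tsum_le_tsum (fun n => ?_) ?_
    (summable_norm_sum_mul_antidiagonal_of_summable_norm hμψn hδn).of_norm
  · rw [sum_mul]
    refine sum_le_sum fun ij hij => ?_
    rw [← mem_antidiagonal.mp hij, mul_right_comm (μ ij.1) (ψ ij.1)]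
    exact mul_le_mul_of_nonneg_left (hφψ _ _) (mul_nonneg (hμ0 _) (hδ0 _))
  · refine (hconv.mul_right C).of_norm_bounded fun n => ?_
    rw [norm_mul, Real.norm_of_nonneg (sum_nonneg fun _ _ => mul_nonneg (hμ0 _) (hδ0 _))]
    exact mul_le_mul_of_nonneg_left (hφ n) (sum_nonneg fun _ _ => mul_nonneg (hμ0 _) (hδ0 _))

section NegativeBinomial

variable {r s p : ℝ}

theorem NB_eq_multichoose (hr : 0 ≤ r) (z : ℕ) :
    NB r p z = Ring.multichoose r z * p ^ r * (1 - p) ^ z := by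
  rcases hr.eq_or_lt with rfl | hr
  · cases z <;> simp [NB, Ring.multichoose_zero_succ]
  · rw [NB, if_neg hr.ne', Ring.multichoose_eq_ascPochhammer_div,
      ← Real.Gamma_add_nat_div_Gamma hr, add_comm r]
    field_simp

theorem NB_nonneg (hr : 0 ≤ r) (hp : 0 < p) (hp1 : p < 1) (z : ℕ) : 0 ≤ NB r p z := by
  rcases hr.eq_or_lt with rfl | hr
  · simp only [NB, if_true]; positivity
  · rw [NB, if_neg hr.ne']
    have := Real.Gamma_pos_of_pos hr
    have : 0 < Real.Gamma (z + r) := Real.Gamma_pos_of_pos (by positivity)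
    have : 0 < 1 - p := by linarith
    positivity

theorem hasSum_NB (hr : 0 ≤ r) (hp : 0 < p) (hp1 : p < 1) : HasSum (NB r p) 1 := by
  have h := (Real.hasSum_multichoose_mul_pow (r := r) (x := 1 - p)
    (by rw [abs_lt]; constructor <;> linarith)).mul_left (p ^ r)
  rw [sub_sub_cancel, one_div, mul_inv_cancel₀ (Real.rpow_pos_of_pos hp r).ne'] at h
  exact h.congr_fun fun z => by rw [NB_eq_multichoose hr]; ring

theorem NB_add (hr : 0 ≤ r) (hs : 0 ≤ s) (hp : 0 < p) (n : ℕ) :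
    NB (r + s) p n = ∑ ij ∈ antidiagonal n, NB r p ij.1 * NB s p ij.2 := by
  rw [NB_eq_multichoose (add_nonneg hr hs), Ring.multichoose_add, sum_mul, sum_mul]
  refine sum_congr rfl fun ij hij => ?_
  rw [NB_eq_multichoose hr, NB_eq_multichoose hs, Real.rpow_add hp, ← mem_antidiagonal.mp hij,
    pow_add]
  ring

theorem hasSum_NB_mul_cast (hr : 0 ≤ r) (hp : 0 < p) (hp1 : p < 1) :
    HasSum (fun z : ℕ => NB r p z * z) (r * (1 - p) / p) := by
  rw [← hasSum_nat_add_iff' 1]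
  have h := (hasSum_NB (add_nonneg hr zero_le_one) hp hp1).mul_left (r * (1 - p) / p)
  simp only [range_one, sum_singleton, Nat.cast_zero, mul_zero, sub_zero, mul_one] at h ⊢
  refine h.congr_fun fun n => ?_
  rw [NB_eq_multichoose hr, NB_eq_multichoose (add_nonneg hr zero_le_one), Real.rpow_add hp,
    Real.rpow_one, Nat.cast_add, Nat.cast_one]
  calc Ring.multichoose r (n + 1) * p ^ r * (1 - p) ^ (n + 1) * (n + 1)
      = ((n + 1) * Ring.multichoose r (n + 1)) * p ^ r * (1 - p) ^ n * (1 - p) := by ring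
    _ = (r * Ring.multichoose (r + 1) n) * p ^ r * (1 - p) ^ n * (1 - p) := by
      rw [Ring.succ_mul_multichoose_succ]
    _ = r * (1 - p) / p * (Ring.multichoose (r + 1) n * (p ^ r * p) * (1 - p) ^ n) := by
      field_simp

theorem hasSum_NB_mul_linear (hr : 0 ≤ r) (hp : 0 < p) (hp1 : p < 1) (A B : ℝ) :
    HasSum (fun n : ℕ => NB r p n * (A + B * n)) (A + B * (r * (1 - p) / p)) := by
  simpa [mul_add, mul_left_comm _ B] using
    ((hasSum_NB hr hp hp1).mul_right A).add ((hasSum_NB_mul_cast hr hp hp1).mul_left B)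

theorem hasSum_NB_mul_NB_mul_linear (hr : 0 ≤ r) (hs : 0 ≤ s) (hp : 0 < p) (hp1 : p < 1)
    (A B : ℝ) :
    HasSum (fun q : ℕ × ℕ => NB r p q.1 * NB s p q.2 * (A + B * (q.1 + q.2)))
      (A + B * ((r + s) * (1 - p) / p)) := by
  have prod {f g : ℕ → ℝ} {a b : ℝ} (hf : HasSum f a) (hg : HasSum g b) (hf0 : 0 ≤ f)
      (hg0 : 0 ≤ g) : HasSum (fun q : ℕ × ℕ => f q.1 * g q.2) (a * b) :=
    hf.mul hg (hf.summable.mul_of_nonneg hg.summable hf0 hg0)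
  have hr0 := NB_nonneg hr hp hp1
  have hs0 := NB_nonneg hs hp hp1
  have hr1 : 0 ≤ fun n : ℕ => NB r p n * n := fun n => mul_nonneg (hr0 n) n.cast_nonneg
  have hs1 : 0 ≤ fun n : ℕ => NB s p n * n := fun n => mul_nonneg (hs0 n) n.cast_nonneg
  have := ((prod (hasSum_NB hr hp hp1) (hasSum_NB hs hp hp1) hr0 hs0).mul_left A).add
    (((prod (hasSum_NB_mul_cast hr hp hp1) (hasSum_NB hs hp hp1) hr1 hs0).add
      (prod (hasSum_NB hr hp hp1) (hasSum_NB_mul_cast hs hp hp1) hr0 hs1)).mul_left B)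
  rw [show A + B * ((r + s) * (1 - p) / p)
    = A * (1 * 1) + B * (r * (1 - p) / p * 1 + 1 * (s * (1 - p) / p)) by ring]
  exact this.congr_fun fun q => by ring

theorem summable_NB_mul_of_abs_le (hr : 0 ≤ r) (hp : 0 < p) (hp1 : p < 1) {φ : ℕ → ℝ}
    {A B : ℝ} (hφ : ∀ n, |φ n| ≤ A + B * n) : Summable fun n => NB r p n * φ n :=
  (hasSum_NB_mul_linear hr hp hp1 A B).summable.of_norm_bounded fun n => by
    rw [norm_mul, Real.norm_of_nonneg (NB_nonneg hr hp hp1 n), Real.norm_eq_abs]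
    exact mul_le_mul_of_nonneg_left (hφ n) (NB_nonneg hr hp hp1 n)

theorem tsum_NB_mul_le (hr : 0 ≤ r) (hp : 0 < p) (hp1 : p < 1) {φ : ℕ → ℝ} {A B : ℝ}
    (hφ : ∀ n, |φ n| ≤ A + B * n) : ∑' n, NB r p n * φ n ≤ A + B * (r * (1 - p) / p) :=
  hasSum_le (fun n => mul_le_mul_of_nonneg_left ((le_abs_self _).trans (hφ n))
      (NB_nonneg hr hp hp1 n))
    (summable_NB_mul_of_abs_le hr hp hp1 hφ).hasSum (hasSum_NB_mul_linear hr hp hp1 A B)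

theorem abs_tsum_NB_mul_le (hr : 0 ≤ r) (hp : 0 < p) (hp1 : p < 1) {φ : ℕ → ℝ} {C : ℝ}
    (hφ : ∀ n, |φ n| ≤ C) : |∑' n, NB r p n * φ n| ≤ C := by
  have bound {φ : ℕ → ℝ} (hφ : ∀ n, |φ n| ≤ C) : ∑' n, NB r p n * φ n ≤ C := by
    simpa using tsum_NB_mul_le hr hp hp1 (B := 0) (by simpa using hφ)
  refine abs_le.mpr ⟨?_, bound hφ⟩
  have := bound (φ := fun n => -φ n) (by simpa using hφ)
  simp only [mul_neg, tsum_neg] at this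
  linarith

theorem summable_NB_mul_of_abs_le_const (hr : 0 ≤ r) (hp : 0 < p) (hp1 : p < 1) {φ : ℕ → ℝ}
    {C : ℝ} (hφ : ∀ n, |φ n| ≤ C) : Summable fun n => NB r p n * φ n :=
  summable_NB_mul_of_abs_le hr hp hp1 (B := 0) (by simpa using hφ)

theorem summable_NB_mul_NB_mul_of_abs_le (hr : 0 ≤ r) (hs : 0 ≤ s) (hp : 0 < p) (hp1 : p < 1)
    {f : ℕ × ℕ → ℝ} {A B : ℝ} (hf : ∀ q, |f q| ≤ A + B * (q.1 + q.2)) :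
    Summable fun q : ℕ × ℕ => NB r p q.1 * NB s p q.2 * f q :=
  (hasSum_NB_mul_NB_mul_linear hr hs hp hp1 A B).summable.of_norm_bounded fun q => by
    have h0 := mul_nonneg (NB_nonneg hr hp hp1 q.1) (NB_nonneg hs hp hp1 q.2)
    rw [norm_mul, Real.norm_of_nonneg h0, Real.norm_eq_abs]
    exact mul_le_mul_of_nonneg_left (hf q) h0

theorem tsum_NB_mul_NB_mul_le (hr : 0 ≤ r) (hs : 0 ≤ s) (hp : 0 < p) (hp1 : p < 1)
    {f : ℕ × ℕ → ℝ} {A B : ℝ} (hf : ∀ q, |f q| ≤ A + B * (q.1 + q.2)) :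
    ∑' q : ℕ × ℕ, NB r p q.1 * NB s p q.2 * f q ≤ A + B * ((r + s) * (1 - p) / p) :=
  hasSum_le (fun q => mul_le_mul_of_nonneg_left ((le_abs_self _).trans (hf q))
      (mul_nonneg (NB_nonneg hr hp hp1 q.1) (NB_nonneg hs hp hp1 q.2)))
    (summable_NB_mul_NB_mul_of_abs_le hr hs hp hp1 hf).hasSum
    (hasSum_NB_mul_NB_mul_linear hr hs hp hp1 A B)

theorem tsum_NB_add_mul_le (hr : 0 ≤ r) (hs : 0 ≤ s) (hp : 0 < p) (hp1 : p < 1)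
    {φ ψ : ℕ → ℝ} {C : ℝ} (hφ : ∀ n, |φ n| ≤ C) (hψ : ∀ n, |ψ n| ≤ C)
    (hφψ : ∀ i j, φ (i + j) ≤ ψ i) :
    ∑' n, NB (r + s) p n * φ n ≤ ∑' n, NB r p n * ψ n := by
  simp_rw [NB_add hr hs hp]
  exact tsum_sum_antidiagonal_mul_le (NB_nonneg hr hp hp1) (NB_nonneg hs hp hp1)
    (hasSum_NB hr hp hp1).summable (hasSum_NB hs hp hp1) hφ hψ hφψ

end NegativeBinomial

theorem abs_max_sub_cast_le (c : ℝ) (z : ℕ) : |max (c - z) 0| ≤ |c| + 1 * z := by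
  rw [abs_of_nonneg (le_max_right _ _)]
  exact max_le (by linarith [le_abs_self c]) (by positivity)

theorem abs_max_cast_sub_le (c : ℝ) (z : ℕ) : |max ((z : ℝ) - c) 0| ≤ |c| + 1 * z := by
  rw [abs_of_nonneg (le_max_right _ _)]
  exact max_le (by linarith [neg_abs_le c]) (by positivity)

theorem max_add_one_sub_sub_max (a : ℤ) (z : ℕ) :
    max (((a + 1 : ℤ) : ℝ) - z) 0 - max ((a : ℝ) - z) 0 = if (z : ℤ) ≤ a then 1 else 0 := by
  split_ifs with h
  · have : (z : ℝ) ≤ a := by exact_mod_cast h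
    rw [max_eq_left (by push_cast; linarith), max_eq_left (by linarith)]
    push_cast
    ring
  · have : (a : ℝ) + 1 ≤ z := by exact_mod_cast (by omega : a + 1 ≤ (z : ℤ))
    rw [max_eq_right (by push_cast; linarith), max_eq_right (by linarith), sub_zero]

theorem max_sub_add_one_sub_max (a : ℤ) (z : ℕ) :
    max ((z : ℝ) - ((a + 1 : ℤ) : ℝ)) 0 - max ((z : ℝ) - a) 0 =
      (if (z : ℤ) ≤ a then 1 else 0) - 1 := by
  split_ifs with h
  · have : (z : ℝ) ≤ a := by exact_mod_cast h
    rw [max_eq_right (by push_cast; linarith), max_eq_right (by linarith)]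
    ring
  · have : (a : ℝ) + 1 ≤ z := by exact_mod_cast (by omega : a + 1 ≤ (z : ℤ))
    rw [max_eq_left (by push_cast; linarith), max_eq_left (by linarith)]
    push_cast
    ring

theorem abs_ite_le_one (P : Prop) [Decidable P] : |(if P then 1 else 0 : ℝ)| ≤ 1 := by
  split_ifs <;> simp

theorem iInf_Ici_add_one {g : ℤ → ℝ} (hg : Monotone (Δ_[1] g)) {x : ℤ}
    (hbdd : BddBelow (Set.range fun a : {a : ℤ // x ≤ a} => g a)) :
    ⨅ a : {a : ℤ // x + 1 ≤ a}, g a = (⨅ a : {a : ℤ // x ≤ a}, g a) + max (Δ_[1] g x) 0 := by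
  rcases le_or_gt 0 (Δ_[1] g x) with hx | hx
  · have hmono : ∀ b, x ≤ b → ∀ c, b ≤ c → g b ≤ g c := by
      intro b hb c hbc
      induction c, hbc using Int.leInduction with
      | base => exact le_rfl
      | succ c hbc ih =>
        have := hx.trans (hg (hb.trans hbc))
        simp only [fwdDiff] at this
        linarith
    have hmin : ∀ y, x ≤ y → ⨅ a : {a : ℤ // y ≤ a}, g a = g y := fun y hy =>
      le_antisymm (ciInf_le (f := fun a : {a : ℤ // y ≤ a} => g a)
          ⟨g y, by rintro _ ⟨a, rfl⟩; exact hmono y hy a a.2⟩ ⟨y, le_rfl⟩)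
        (le_ciInf fun a => hmono y hy a a.2)
    rw [hmin x le_rfl, hmin (x + 1) (by omega), max_eq_left hx, fwdDiff]
    ring
  · have hbdd' : BddBelow (Set.range fun a : {a : ℤ // x + 1 ≤ a} => g a) :=
      hbdd.mono (by rintro _ ⟨a, rfl⟩; exact ⟨⟨a, by omega⟩, rfl⟩)
    rw [max_eq_right hx.le, add_zero]
    refine le_antisymm (le_ciInf fun a => ?_) (le_ciInf fun a => ciInf_le hbdd ⟨a, by omega⟩)
    rcases (show x ≤ a.1 from a.2).eq_or_lt with ha | ha
    · have := ciInf_le hbdd' ⟨x + 1, le_rfl⟩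
      simp only [fwdDiff] at hx
      rw [← ha]
      linarith
    · exact ciInf_le hbdd' ⟨a, ha⟩

structure IsRegularCostToGo (V : ℤ → ℕ → ℝ) : Prop where
  nonneg : ∀ x m, 0 ≤ V x m
  le_linear : ∃ C, ∀ x m, V x m ≤ C * (1 + |(x : ℝ)| + m)
  abs_fwdDiff_le : ∃ B, ∀ x m, |Δ_[1] (V · m) x| ≤ B
  fwdDiff_monotone : ∀ m, Monotone (Δ_[1] (V · m))
  fwdDiff_antitone : ∀ x, Antitone fun m => Δ_[1] (V · m) x

theorem isRegularCostToGo_zero : IsRegularCostToGo fun _ _ => 0 where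
  nonneg _ _ := le_rfl
  le_linear := ⟨0, fun _ _ => by simp⟩
  abs_fwdDiff_le := ⟨0, fun _ _ => by simp [fwdDiff]⟩
  fwdDiff_monotone _ _ _ _ := by simp [fwdDiff]
  fwdDiff_antitone _ _ _ _ := by simp [fwdDiff]

theorem IsRegularCostToGo.abs_le_shift {V : ℤ → ℕ → ℝ} (hV : IsRegularCostToGo V) :
    ∃ C, 0 ≤ C ∧ ∀ (a : ℤ) (k z κ : ℕ),
      |V (a - z) (k + z + κ)| ≤ C * (1 + |(a : ℝ)| + k) + 2 * C * (z + κ) := by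
  obtain ⟨C, hC⟩ := hV.le_linear
  have hC0 : 0 ≤ C := by simpa using (hV.nonneg 0 0).trans (hC 0 0)
  refine ⟨C, hC0, fun a k z κ => ?_⟩
  have hshift : |(a : ℝ) - z| ≤ |(a : ℝ)| + z := by simpa using abs_sub (a : ℝ) z
  have := mul_le_mul_of_nonneg_left hshift hC0
  rw [abs_of_nonneg (hV.nonneg _ _)]
  refine (hC _ _).trans ?_
  push_cast
  nlinarith [mul_nonneg hC0 (κ.cast_nonneg : (0 : ℝ) ≤ κ)]

section Model

variable {α0 β0 : ℝ} {N t : ℕ} {cv ch cb : ℝ} {W : ℕ → ℤ → ℕ → ℝ}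

theorem pt_pos (hβ0 : 0 < β0) : 0 < pt β0 N t := by
  unfold pt
  positivity

theorem pt_lt_one (hβ0 : 0 ≤ β0) : pt β0 N t < 1 := by
  unfold pt
  rw [div_lt_one (by positivity)]
  linarith

theorem natCast_sub_one_mul_nonneg (hN : 1 ≤ N) {x : ℝ} (hx : 0 ≤ x) :
    0 ≤ ((N : ℝ) - 1) * x :=
  mul_nonneg (sub_nonneg.mpr (Nat.one_le_cast.mpr hN)) hx

theorem EZK_eq_tsum_mul_tsum (k : ℕ) (f : ℕ → ℕ → ℝ) :
    EZK α0 β0 N t k f = ∑' z, NB (α0 + k) (pt β0 N t) z *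
      ∑' κ, NB (((N : ℝ) - 1) * (α0 + k)) (pt β0 N t) κ * f z κ := by
  simp_rw [EZK, ← tsum_mul_left, mul_assoc]

theorem summable_EZK_of_abs_le (hα0 : 0 ≤ α0) (hβ0 : 0 < β0) (hN : 1 ≤ N) {k : ℕ}
    {f : ℕ → ℕ → ℝ} {A B : ℝ} (hf : ∀ z κ, |f z κ| ≤ A + B * (z + κ)) :
    Summable fun q : ℕ × ℕ => NB (α0 + k) (pt β0 N t) q.1 *
      NB (((N : ℝ) - 1) * (α0 + k)) (pt β0 N t) q.2 * f q.1 q.2 :=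
  summable_NB_mul_NB_mul_of_abs_le (by positivity) (natCast_sub_one_mul_nonneg hN (by positivity))
    (pt_pos hβ0) (pt_lt_one hβ0.le) fun q => hf q.1 q.2

theorem EZK_le (hα0 : 0 ≤ α0) (hβ0 : 0 < β0) (hN : 1 ≤ N) {k : ℕ} {f : ℕ → ℕ → ℝ} {A B : ℝ}
    (hf : ∀ z κ, |f z κ| ≤ A + B * (z + κ)) :
    EZK α0 β0 N t k f ≤ A + B * (N * (α0 + k) * (1 - pt β0 N t) / pt β0 N t) := by
  rw [EZK, ← (summable_EZK_of_abs_le hα0 hβ0 hN hf).tsum_prod]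
  refine (tsum_NB_mul_NB_mul_le (by positivity) (natCast_sub_one_mul_nonneg hN (by positivity))
    (pt_pos hβ0) (pt_lt_one hβ0.le) fun q => hf q.1 q.2).trans_eq ?_
  ring

theorem EZK_sub (hα0 : 0 ≤ α0) (hβ0 : 0 < β0) (hN : 1 ≤ N) {k : ℕ} {f g : ℕ → ℕ → ℝ}
    {A B A' B' : ℝ} (hf : ∀ z κ, |f z κ| ≤ A + B * (z + κ))
    (hg : ∀ z κ, |g z κ| ≤ A' + B' * (z + κ)) :
    EZK α0 β0 N t k f - EZK α0 β0 N t k g = EZK α0 β0 N t k fun z κ => f z κ - g z κ := by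
  have hf' := summable_EZK_of_abs_le (t := t) (k := k) hα0 hβ0 hN hf
  have hg' := summable_EZK_of_abs_le (t := t) (k := k) hα0 hβ0 hN hg
  rw [EZK, EZK, EZK, ← hf'.tsum_prod, ← hg'.tsum_prod, ← hf'.tsum_sub hg',
    (hf'.sub hg').tsum_prod]
  simp_rw [mul_sub]

theorem abs_EZK_le (hα0 : 0 ≤ α0) (hβ0 : 0 < β0) (hN : 1 ≤ N) {k : ℕ} {f : ℕ → ℕ → ℝ} {C : ℝ}
    (hf : ∀ z κ, |f z κ| ≤ C) : |EZK α0 β0 N t k f| ≤ C := by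
  rw [EZK_eq_tsum_mul_tsum]
  exact abs_tsum_NB_mul_le (by positivity) (pt_pos hβ0) (pt_lt_one hβ0.le) fun z =>
    abs_tsum_NB_mul_le (natCast_sub_one_mul_nonneg hN (by positivity)) (pt_pos hβ0)
      (pt_lt_one hβ0.le) (hf z)

theorem EZK_mono (hα0 : 0 ≤ α0) (hβ0 : 0 < β0) (hN : 1 ≤ N) {k : ℕ} {f g : ℕ → ℕ → ℝ} {C : ℝ}
    (hf : ∀ z κ, |f z κ| ≤ C) (hg : ∀ z κ, |g z κ| ≤ C) (hfg : ∀ z κ, f z κ ≤ g z κ) :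
    EZK α0 β0 N t k f ≤ EZK α0 β0 N t k g := by
  have hr : 0 ≤ α0 + k := by positivity
  have hs := natCast_sub_one_mul_nonneg hN hr
  have hp := pt_pos (N := N) (t := t) hβ0
  have hp1 := pt_lt_one (N := N) (t := t) hβ0.le
  rw [EZK_eq_tsum_mul_tsum, EZK_eq_tsum_mul_tsum]
  refine Summable.tsum_le_tsum (fun z => mul_le_mul_of_nonneg_left ?_ (NB_nonneg hr hp hp1 z))
    (summable_NB_mul_of_abs_le_const hr hp hp1 fun z => abs_tsum_NB_mul_le hs hp hp1 (hf z))
    (summable_NB_mul_of_abs_le_const hr hp hp1 fun z => abs_tsum_NB_mul_le hs hp hp1 (hg z))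
  exact Summable.tsum_le_tsum (fun κ => mul_le_mul_of_nonneg_left (hfg z κ)
    (NB_nonneg hs hp hp1 κ)) (summable_NB_mul_of_abs_le_const hs hp hp1 (hf z))
    (summable_NB_mul_of_abs_le_const hs hp hp1 (hg z))

theorem EZK_le_of_le_add (hα0 : 0 ≤ α0) (hβ0 : 0 < β0) (hN : 1 ≤ N) {k k' : ℕ} (hk : k ≤ k')
    {f f' : ℕ → ℕ → ℝ} {C : ℝ} (hf : ∀ z κ, |f z κ| ≤ C) (hf' : ∀ z κ, |f' z κ| ≤ C)
    (hff' : ∀ z j κ e, f' (z + j) (κ + e) ≤ f z κ) :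
    EZK α0 β0 N t k' f' ≤ EZK α0 β0 N t k f := by
  obtain ⟨d, rfl⟩ := Nat.exists_eq_add_of_le hk
  have hr : 0 ≤ α0 + k := by positivity
  have hs := natCast_sub_one_mul_nonneg hN hr
  have hd := natCast_sub_one_mul_nonneg hN d.cast_nonneg
  have hp := pt_pos (N := N) (t := t) hβ0
  have hp1 := pt_lt_one (N := N) (t := t) hβ0.le
  have hμ : α0 + ((k + d : ℕ) : ℝ) = (α0 + k) + d := by push_cast; ring
  have hν : ((N : ℝ) - 1) * (α0 + ((k + d : ℕ) : ℝ)) =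
      ((N : ℝ) - 1) * (α0 + k) + ((N : ℝ) - 1) * d := by push_cast; ring
  rw [EZK_eq_tsum_mul_tsum, EZK_eq_tsum_mul_tsum, hν, hμ]
  refine tsum_NB_add_mul_le hr d.cast_nonneg hp hp1
    (fun z => abs_tsum_NB_mul_le (add_nonneg hs hd) hp hp1 (hf' z))
    (fun z => abs_tsum_NB_mul_le hs hp hp1 (hf z)) fun z j => ?_
  exact tsum_NB_add_mul_le hs hd hp hp1 (hf' (z + j)) (hf z) (hff' z j)

theorem fwdDiff_G (hα0 : 0 ≤ α0) (hβ0 : 0 < β0) (hN : 1 ≤ N)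
    (hV : IsRegularCostToGo (W (t + 1))) (a : ℤ) (k : ℕ) :
    Δ_[1] (G α0 β0 N cv ch cb W t · k) a =
      cv - cb + (ch + cb) * ∑' z : ℕ, NB (α0 + k) (pt β0 N t) z * (if (z : ℤ) ≤ a then 1 else 0)
        + EZK α0 β0 N t k fun z κ => Δ_[1] (W (t + 1) · (k + z + κ)) (a - z) := by
  have hr : 0 ≤ α0 + k := by positivity
  have hp := pt_pos (N := N) (t := t) hβ0
  have hp1 := pt_lt_one (N := N) (t := t) hβ0.le
  have hind := summable_NB_mul_of_abs_le_const hr hp hp1 fun z => abs_ite_le_one ((z : ℤ) ≤ a)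
  have hmass := hasSum_NB hr hp hp1
  have hold : ∑' z : ℕ, NB (α0 + k) (pt β0 N t) z * max (((a + 1 : ℤ) : ℝ) - z) 0
      - ∑' z : ℕ, NB (α0 + k) (pt β0 N t) z * max ((a : ℝ) - z) 0
      = ∑' z : ℕ, NB (α0 + k) (pt β0 N t) z * (if (z : ℤ) ≤ a then 1 else 0) := by
    rw [← Summable.tsum_sub (summable_NB_mul_of_abs_le hr hp hp1 (abs_max_sub_cast_le _))
      (summable_NB_mul_of_abs_le hr hp hp1 (abs_max_sub_cast_le _))]
    simp_rw [← mul_sub, max_add_one_sub_sub_max]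
  have hback : ∑' z : ℕ, NB (α0 + k) (pt β0 N t) z * max ((z : ℝ) - ((a + 1 : ℤ) : ℝ)) 0
      - ∑' z : ℕ, NB (α0 + k) (pt β0 N t) z * max ((z : ℝ) - a) 0
      = ∑' z : ℕ, NB (α0 + k) (pt β0 N t) z * (if (z : ℤ) ≤ a then 1 else 0) - 1 := by
    rw [← Summable.tsum_sub (summable_NB_mul_of_abs_le hr hp hp1 (abs_max_cast_sub_le _))
      (summable_NB_mul_of_abs_le hr hp hp1 (abs_max_cast_sub_le _))]
    nth_rewrite 2 [← hmass.tsum_eq]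
    rw [← hind.tsum_sub hmass.summable]
    simp_rw [← mul_sub, max_sub_add_one_sub_max, mul_sub, mul_one]
  obtain ⟨C, -, hC⟩ := hV.abs_le_shift
  have hE := EZK_sub (t := t) (k := k) hα0 hβ0 hN (fun z κ => hC (a + 1) k z κ)
    (fun z κ => hC a k z κ)
  simp only [fwdDiff, G, sub_add_eq_add_sub]
  push_cast at hold hback ⊢
  linear_combination ch * hold + cb * hback + hE

theorem fwdDiff_G_monotone (hα0 : 0 ≤ α0) (hβ0 : 0 < β0) (hN : 1 ≤ N) (hchb : 0 ≤ ch + cb)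
    (hV : IsRegularCostToGo (W (t + 1))) (k : ℕ) :
    Monotone (Δ_[1] (G α0 β0 N cv ch cb W t · k)) := by
  intro a a' haa'
  have hr : 0 ≤ α0 + k := by positivity
  have hp := pt_pos (N := N) (t := t) hβ0
  have hp1 := pt_lt_one (N := N) (t := t) hβ0.le
  obtain ⟨B, hB⟩ := hV.abs_fwdDiff_le
  have hF : ∑' z : ℕ, NB (α0 + k) (pt β0 N t) z * (if (z : ℤ) ≤ a then 1 else 0)
      ≤ ∑' z : ℕ, NB (α0 + k) (pt β0 N t) z * (if (z : ℤ) ≤ a' then 1 else 0) :=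
    Summable.tsum_le_tsum
      (fun z => mul_le_mul_of_nonneg_left (by split_ifs <;> first | omega | norm_num)
        (NB_nonneg hr hp hp1 z))
      (summable_NB_mul_of_abs_le_const hr hp hp1 fun z => abs_ite_le_one _)
      (summable_NB_mul_of_abs_le_const hr hp hp1 fun z => abs_ite_le_one _)
  have hE := EZK_mono (t := t) (k := k) hα0 hβ0 hN (fun z κ => hB (a - z) (k + z + κ))
    (fun z κ => hB (a' - z) (k + z + κ))
    fun z κ => hV.fwdDiff_monotone (k + z + κ) (by omega : a - z ≤ a' - z)
  rw [fwdDiff_G hα0 hβ0 hN hV, fwdDiff_G hα0 hβ0 hN hV]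
  linarith [mul_le_mul_of_nonneg_left hF hchb]

theorem fwdDiff_G_antitone (hα0 : 0 ≤ α0) (hβ0 : 0 < β0) (hN : 1 ≤ N) (hchb : 0 ≤ ch + cb)
    (hV : IsRegularCostToGo (W (t + 1))) (a : ℤ) :
    Antitone fun k => Δ_[1] (G α0 β0 N cv ch cb W t · k) a := by
  intro k k' hk
  have hr : 0 ≤ α0 + k := by positivity
  have hp := pt_pos (N := N) (t := t) hβ0
  have hp1 := pt_lt_one (N := N) (t := t) hβ0.le
  obtain ⟨B, hB⟩ := hV.abs_fwdDiff_le
  obtain ⟨d, rfl⟩ := Nat.exists_eq_add_of_le hk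
  have hF : ∑' z : ℕ, NB (α0 + (k + d : ℕ)) (pt β0 N t) z * (if (z : ℤ) ≤ a then 1 else 0)
      ≤ ∑' z : ℕ, NB (α0 + k) (pt β0 N t) z * (if (z : ℤ) ≤ a then 1 else 0) := by
    rw [show α0 + ((k + d : ℕ) : ℝ) = (α0 + k) + d by push_cast; ring]
    exact tsum_NB_add_mul_le hr d.cast_nonneg hp hp1 (fun _ => abs_ite_le_one _)
      (fun _ => abs_ite_le_one _) fun i j => by split_ifs <;> first | omega | norm_num
  have hE := EZK_le_of_le_add (t := t) hα0 hβ0 hN hk (fun z κ => hB (a - z) (k + z + κ))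
    (fun z κ => hB (a - z) (k + d + z + κ)) fun z j κ e =>
      calc Δ_[1] (W (t + 1) · (k + d + (z + j) + (κ + e))) (a - (z + j : ℕ))
          ≤ Δ_[1] (W (t + 1) · (k + d + (z + j) + (κ + e))) (a - z) :=
            hV.fwdDiff_monotone _ (by omega)
        _ ≤ Δ_[1] (W (t + 1) · (k + z + κ)) (a - z) := hV.fwdDiff_antitone _ (by omega)
  dsimp only
  rw [fwdDiff_G hα0 hβ0 hN hV, fwdDiff_G hα0 hβ0 hN hV]
  linarith [mul_le_mul_of_nonneg_left hF hchb]

theorem abs_fwdDiff_G_le (hα0 : 0 ≤ α0) (hβ0 : 0 < β0) (hN : 1 ≤ N)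
    (hV : IsRegularCostToGo (W (t + 1))) :
    ∃ B, ∀ a k, |Δ_[1] (G α0 β0 N cv ch cb W t · k) a| ≤ B := by
  obtain ⟨B, hB⟩ := hV.abs_fwdDiff_le
  refine ⟨|cv - cb| + |ch + cb| + B, fun a k => ?_⟩
  have hF := abs_tsum_NB_mul_le (by positivity : 0 ≤ α0 + k) (pt_pos (N := N) (t := t) hβ0)
    (pt_lt_one hβ0.le) fun z => abs_ite_le_one ((z : ℤ) ≤ a)
  have hE := abs_EZK_le (t := t) (k := k) hα0 hβ0 hN fun z κ => hB (a - z) (k + z + κ)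
  rw [fwdDiff_G hα0 hβ0 hN hV]
  calc _ ≤ |cv - cb| + |ch + cb| * |∑' z : ℕ, NB (α0 + k) (pt β0 N t) z *
          (if (z : ℤ) ≤ a then 1 else 0)| + |EZK α0 β0 N t k fun z κ =>
            Δ_[1] (W (t + 1) · (k + z + κ)) (a - z)| := by
        rw [← abs_mul]; exact abs_add_three _ _ _
    _ ≤ |cv - cb| + |ch + cb| * 1 + B := by gcongr
    _ = _ := by ring

theorem cv_mul_le_G (hα0 : 0 ≤ α0) (hβ0 : 0 < β0) (hN : 1 ≤ N) (hch : 0 ≤ ch) (hcb : 0 ≤ cb)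
    (hV0 : ∀ x m, 0 ≤ W (t + 1) x m) (a : ℤ) (k : ℕ) : cv * a ≤ G α0 β0 N cv ch cb W t a k := by
  have hr : 0 ≤ α0 + k := by positivity
  have hs := natCast_sub_one_mul_nonneg hN hr
  have hp := pt_pos (N := N) (t := t) hβ0
  have hp1 := pt_lt_one (N := N) (t := t) hβ0.le
  have hhold : 0 ≤ ∑' z : ℕ, NB (α0 + k) (pt β0 N t) z * max ((a : ℝ) - z) 0 :=
    tsum_nonneg fun z => mul_nonneg (NB_nonneg hr hp hp1 z) (le_max_right _ _)
  have hback : 0 ≤ ∑' z : ℕ, NB (α0 + k) (pt β0 N t) z * max ((z : ℝ) - a) 0 :=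
    tsum_nonneg fun z => mul_nonneg (NB_nonneg hr hp hp1 z) (le_max_right _ _)
  have hE : 0 ≤ EZK α0 β0 N t k fun z κ => W (t + 1) (a - z) (k + z + κ) :=
    tsum_nonneg fun z => tsum_nonneg fun κ =>
      mul_nonneg (mul_nonneg (NB_nonneg hr hp hp1 z) (NB_nonneg hs hp hp1 κ)) (hV0 _ _)
  unfold G
  linarith [mul_nonneg hch hhold, mul_nonneg hcb hback]

theorem G_sub_le_linear (hα0 : 0 ≤ α0) (hβ0 : 0 < β0) (hN : 1 ≤ N) (hch : 0 ≤ ch)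
    (hcb : 0 ≤ cb) (hV : IsRegularCostToGo (W (t + 1))) :
    ∃ C, ∀ (x : ℤ) (m : ℕ), G α0 β0 N cv ch cb W t x m - cv * x ≤ C * (1 + |(x : ℝ)| + m) := by
  set p := pt β0 N t
  have hp : 0 < p := pt_pos hβ0
  have hp1 : p < 1 := pt_lt_one hβ0.le
  set ρ := (1 - p) / p
  have hρ : 0 ≤ ρ := div_nonneg (by linarith) hp.le
  obtain ⟨C, hC0, hC⟩ := hV.abs_le_shift
  refine ⟨(ch + cb) * (1 + (α0 + 1) * ρ) + C + 2 * C * N * ((α0 + 1) * ρ), fun x m => ?_⟩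
  have hr : 0 ≤ α0 + m := by positivity
  have hhold := tsum_NB_mul_le hr hp hp1 (abs_max_sub_cast_le (x : ℝ))
  have hback := tsum_NB_mul_le hr hp hp1 (abs_max_cast_sub_le (x : ℝ))
  have hE := EZK_le (t := t) (k := m) hα0 hβ0 hN fun z κ => hC x m z κ
  have hL : |(x : ℝ)| ≤ 1 + |(x : ℝ)| + m := by linarith [(m.cast_nonneg : (0 : ℝ) ≤ m)]
  have hLm : (α0 + m) * ρ ≤ (α0 + 1) * ρ * (1 + |(x : ℝ)| + m) := by
    have : α0 + m ≤ (α0 + 1) * (1 + |(x : ℝ)| + m) := by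
      nlinarith [abs_nonneg (x : ℝ), (m.cast_nonneg : (0 : ℝ) ≤ m)]
    linarith [mul_le_mul_of_nonneg_right this hρ]
  calc G α0 β0 N cv ch cb W t x m - cv * x
      ≤ (ch + cb) * (|(x : ℝ)| + (α0 + m) * ρ) + C * (1 + |(x : ℝ)| + m)
          + 2 * C * N * ((α0 + m) * ρ) := by
        unfold G
        have e1 : (α0 + m) * (1 - p) / p = (α0 + m) * ρ := by ring
        have e2 : N * (α0 + m) * (1 - p) / p = N * ((α0 + m) * ρ) := by ring
        rw [e1] at hhold hback
        rw [e2] at hE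
        linarith [mul_le_mul_of_nonneg_left hhold hch, mul_le_mul_of_nonneg_left hback hcb]
    _ ≤ (ch + cb) * ((1 + |(x : ℝ)| + m) + (α0 + 1) * ρ * (1 + |(x : ℝ)| + m))
          + C * (1 + |(x : ℝ)| + m) + 2 * C * N * ((α0 + 1) * ρ * (1 + |(x : ℝ)| + m)) := by
        gcongr
    _ = _ := by ring

theorem bddBelow_G (hα0 : 0 ≤ α0) (hβ0 : 0 < β0) (hN : 1 ≤ N) (hcv : 0 ≤ cv) (hch : 0 ≤ ch)
    (hcb : 0 ≤ cb) (hV0 : ∀ x m, 0 ≤ W (t + 1) x m) (x : ℤ) (m : ℕ) :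
    BddBelow (Set.range fun a : {a : ℤ // x ≤ a} => G α0 β0 N cv ch cb W t a m) := by
  refine ⟨cv * x, ?_⟩
  rintro _ ⟨a, rfl⟩
  exact (mul_le_mul_of_nonneg_left (by exact_mod_cast a.2) hcv).trans
    (cv_mul_le_G hα0 hβ0 hN hch hcb hV0 a m)

theorem fwdDiff_W (hα0 : 0 ≤ α0) (hβ0 : 0 < β0) (hN : 1 ≤ N) (hcv : 0 ≤ cv) (hch : 0 ≤ ch)
    (hcb : 0 ≤ cb)
    (hWt : ∀ x k, W t x k = (⨅ a : {a : ℤ // x ≤ a}, G α0 β0 N cv ch cb W t a.1 k) - cv * x)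
    (hV : IsRegularCostToGo (W (t + 1))) (x : ℤ) (m : ℕ) :
    Δ_[1] (W t · m) x = max (Δ_[1] (G α0 β0 N cv ch cb W t · m) x) 0 - cv := by
  simp only [fwdDiff]
  rw [hWt, hWt, iInf_Ici_add_one (fwdDiff_G_monotone hα0 hβ0 hN (add_nonneg hch hcb) hV m)
    (bddBelow_G hα0 hβ0 hN hcv hch hcb hV.nonneg x m)]
  simp only [fwdDiff]
  push_cast
  ring

theorem IsRegularCostToGo.of_succ (hα0 : 0 ≤ α0) (hβ0 : 0 < β0) (hN : 1 ≤ N) (hcv : 0 ≤ cv)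
    (hch : 0 ≤ ch) (hcb : 0 ≤ cb)
    (hWt : ∀ x k, W t x k = (⨅ a : {a : ℤ // x ≤ a}, G α0 β0 N cv ch cb W t a.1 k) - cv * x)
    (hV : IsRegularCostToGo (W (t + 1))) : IsRegularCostToGo (W t) where
  nonneg x m := by
    rw [hWt, sub_nonneg]
    exact le_ciInf fun a => (mul_le_mul_of_nonneg_left (by exact_mod_cast a.2) hcv).trans
      (cv_mul_le_G hα0 hβ0 hN hch hcb hV.nonneg a m)
  le_linear := by
    obtain ⟨C, hC⟩ := G_sub_le_linear hα0 hβ0 hN hch hcb hV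
    refine ⟨C, fun x m => ?_⟩
    rw [hWt]
    linarith [ciInf_le (bddBelow_G hα0 hβ0 hN hcv hch hcb hV.nonneg x m) ⟨x, le_rfl⟩, hC x m]
  abs_fwdDiff_le := by
    obtain ⟨B, hB⟩ := abs_fwdDiff_G_le (cv := cv) (ch := ch) (cb := cb) hα0 hβ0 hN hV
    refine ⟨B + cv, fun x m => ?_⟩
    have hd := abs_le.mp (hB x m)
    rw [fwdDiff_W hα0 hβ0 hN hcv hch hcb hWt hV, abs_le]
    constructor
    · linarith [le_max_right (Δ_[1] (G α0 β0 N cv ch cb W t · m) x) 0]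
    · linarith [max_le hd.2 (by linarith : (0 : ℝ) ≤ B)]
  fwdDiff_monotone m x x' hxx' := by
    simp only [fwdDiff_W hα0 hβ0 hN hcv hch hcb hWt hV]
    gcongr
    exact fwdDiff_G_monotone hα0 hβ0 hN (add_nonneg hch hcb) hV m hxx'
  fwdDiff_antitone x m m' hmm' := by
    simp only [fwdDiff_W hα0 hβ0 hN hcv hch hcb hWt hV]
    gcongr
    exact fwdDiff_G_antitone hα0 hβ0 hN (add_nonneg hch hcb) hV x hmm'

end Model

theorem deltaG_antitone_k_general
    (α0 β0 : ℝ) (hα0 : 0 < α0) (hβ0 : 0 < β0)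
    (N T : ℕ) (hN : 1 ≤ N)
    (cv ch cb : ℝ) (hcv : 0 ≤ cv) (hch : 0 < ch) (hcb : 0 < cb)
    (W : ℕ → ℤ → ℕ → ℝ)
    (hWT : ∀ x k, W T x k = 0)
    (hW : ∀ t, t < T → ∀ x k,
      W t x k = (⨅ a : {a : ℤ // x ≤ a}, G α0 β0 N cv ch cb W t a.1 k) - cv * (x : ℝ)) :
    ∀ t, t < T → ∀ (a : ℤ) (k k' : ℕ), k ≤ k' →
      G α0 β0 N cv ch cb W t (a + 1) k' - G α0 β0 N cv ch cb W t a k' ≤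
        G α0 β0 N cv ch cb W t (a + 1) k - G α0 β0 N cv ch cb W t a k := by
  have hregular : ∀ t ≤ T, IsRegularCostToGo (W t) := fun t ht => by
    induction ht using Nat.decreasingInduction with
    | self => simpa [funext fun x => funext (hWT x)] using isRegularCostToGo_zero
    | of_succ t ht ih =>
      exact ih.of_succ hα0.le hβ0 hN hcv hch.le hcb.le (hW t ht)
  intro t ht a k k' hk
  exact fwdDiff_G_antitone hα0.le hβ0 hN (add_pos hch hcb).le (hregular (t + 1) ht) a hk

/-- The first difference `ΔG_t(a,k) = G_t(a+1,k) − G_t(a,k)` is non-increasing in `k`. -/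
theorem deltaG_antitone_k
    (α0 β0 : ℝ) (hα0 : 0 < α0) (hβ0 : 0 < β0)
    (N T : ℕ) (hN : 1 ≤ N) (hT : 1 ≤ T)
    (cv ch cb : ℝ) (hcv : 0 ≤ cv) (hch : 0 < ch) (hcb : 0 < cb)
    (W : ℕ → ℤ → ℕ → ℝ)
    (hWT : ∀ x k, W T x k = 0)
    (hW : ∀ t, t < T → ∀ x k,
      W t x k = (⨅ a : {a : ℤ // x ≤ a}, G α0 β0 N cv ch cb W t a.1 k) - cv * (x : ℝ)) :
    ∀ t, t < T → ∀ (a : ℤ) (k k' : ℕ), k ≤ k' →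
      G α0 β0 N cv ch cb W t (a + 1) k' - G α0 β0 N cv ch cb W t a k' ≤
        G α0 β0 N cv ch cb W t (a + 1) k - G α0 β0 N cv ch cb W t a k :=
  deltaG_antitone_k_general α0 β0 hα0 hβ0 N T hN cv ch cb hcv hch hcb W hWT hW
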